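/- arXiv:math/9204238 — 2 statements merged into one kernel-verified Lean document; each statement's English description precedes it below -/
import Mathlib

section
/- If g ∈ F_α^∞ and z₁ ∈ ℂ with g(z₁) = 0, then the entire function f(z) = g(z)/((z−z₁)(z−z₂)), for any z₂ ≠ z₁ with g(z₂)=0 (or more simply g(z)/(z−z₁)² when z₁ is a double zero), satisfies f ∈ F_α^2; in particular, if g ∈ F_α^∞ vanishes at two distinct points z₁, z₂, then g(z)/((z−z₁)(z−z₂)) ∈ F_α^2. -/
open MeasureTheory Filter Pointwise

noncomputable section

/-- A function is entire if it is complex-differentiable on all of ℂ. -/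
def Entire (f : ℂ → ℂ) : Prop := Differentiable ℂ f

/-- Membership in the Bargmann-Fock space `F_α^2`. -/
def FockL2Mem (α : ℝ) (f : ℂ → ℂ) : Prop :=
  Entire f ∧ Integrable (fun z : ℂ => ‖f z‖ ^ 2 * Real.exp (-α * ‖z‖ ^ 2)) volume

/-- The squared norm in `F_α^2`. -/
def fockNormSq (α : ℝ) (f : ℂ → ℂ) : ℝ :=
  ∫ z : ℂ, ‖f z‖ ^ 2 * ((α / Real.pi) * Real.exp (-α * ‖z‖ ^ 2))

/-- Membership in the Bargmann-Fock space `F_α^∞`. -/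
def FockInfMem (α : ℝ) (f : ℂ → ℂ) : Prop :=
  Entire f ∧ ∃ M : ℝ, ∀ z : ℂ, Real.exp (-α * ‖z‖ ^ 2 / 2) * ‖f z‖ ≤ M

/-- The norm in `F_α^∞`. -/
def fockSupNorm (α : ℝ) (f : ℂ → ℂ) : ℝ :=
  ⨆ z : ℂ, Real.exp (-α * ‖z‖ ^ 2 / 2) * ‖f z‖

/-- The weighted translation operator `T_a`. -/
def fockTranslate (α : ℝ) (a : ℂ) (f : ℂ → ℂ) : ℂ → ℂ :=
  fun z => Complex.exp (α * (starRingEnd ℂ) a * z - α * ‖a‖ ^ 2 / 2) * f (z - a)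

/-- The weighted sampling sum over `Γ`. -/
def samplingSum (α : ℝ) (Γ : Set ℂ) (f : ℂ → ℂ) : ℝ :=
  ∑' z : Γ, Real.exp (-α * ‖(z : ℂ)‖ ^ 2) * ‖f z‖ ^ 2

/-- `Γ` is a set of sampling for `F_α^2`. -/
def IsSamplingSet (α : ℝ) (Γ : Set ℂ) : Prop :=
  ∃ A B : ℝ, 0 < A ∧ 0 < B ∧ ∀ f, FockL2Mem α f →
    A * fockNormSq α f ≤ samplingSum α Γ f ∧ samplingSum α Γ f ≤ B * fockNormSq α f

/-- `Γ` is a set of interpolation for `F_α^2`. -/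
def IsInterpolationSet (α : ℝ) (Γ : Set ℂ) : Prop :=
  ∀ a : Γ → ℂ, Summable (fun j => ‖a j‖ ^ 2) →
    ∃ f, FockL2Mem α f ∧ ∀ j : Γ, (Real.exp (-α * ‖(j : ℂ)‖ ^ 2 / 2) : ℂ) * f j = a j

/-- `Γ` is a set of sampling for `F_α^∞`. -/
def IsSamplingSetInf (α : ℝ) (Γ : Set ℂ) : Prop :=
  ∃ K : ℝ, 0 < K ∧ ∀ f, FockInfMem α f →
    fockSupNorm α f ≤ K * ⨆ z : Γ, Real.exp (-α * ‖(z : ℂ)‖ ^ 2 / 2) * ‖f z‖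

/-- `Γ` is a set of interpolation for `F_α^∞`. -/
def IsInterpolationSetInf (α : ℝ) (Γ : Set ℂ) : Prop :=
  ∀ a : Γ → ℂ, (∃ M : ℝ, ∀ j, ‖a j‖ ≤ M) →
    ∃ f, FockInfMem α f ∧ ∀ j : Γ, (Real.exp (-α * ‖(j : ℂ)‖ ^ 2 / 2) : ℂ) * f j = a j

/-- A set is uniformly discrete if its points are separated by a fixed positive distance. -/
def UniformlyDiscrete (Γ : Set ℂ) : Prop :=
  ∃ q : ℝ, 0 < q ∧ ∀ z ∈ Γ, ∀ w ∈ Γ, z ≠ w → q ≤ dist z w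

/-- Smallest number of points of `Γ` in a translate of `r • I`. -/
def nMin (Γ I : Set ℂ) (r : ℝ) : ℝ := ⨅ w : ℂ, ((Γ ∩ ((· + w) '' (r • I))).ncard : ℝ)

/-- Largest number of points of `Γ` in a translate of `r • I`. -/
def nMax (Γ I : Set ℂ) (r : ℝ) : ℝ := ⨆ w : ℂ, ((Γ ∩ ((· + w) '' (r • I))).ncard : ℝ)

/-- Beurling's lower uniform density, computed with respect to `I`. -/
def lowerDensity (Γ I : Set ℂ) : ℝ := liminf (fun r : ℝ => nMin Γ I r / r ^ 2) atTop

/-- Beurling's upper uniform density, computed with respect to `I`. -/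
def upperDensity (Γ I : Set ℂ) : ℝ := limsup (fun r : ℝ => nMax Γ I r / r ^ 2) atTop

/-- The closed unit square in ℂ. -/
def unitSquare : Set ℂ := {z : ℂ | z.re ∈ Set.Icc (0 : ℝ) 1 ∧ z.im ∈ Set.Icc (0 : ℝ) 1}

end

/-- dividing a function of `F_α^∞` by a quadratic with zeros at two of
its zeros lands in `F_α^2`. -/
theorem div_quadratic_mem_fockL2 (α : ℝ) (hα : 0 < α) (g : ℂ → ℂ)
    (hg : FockInfMem α g) (z₁ z₂ : ℂ) (hne : z₁ ≠ z₂)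
    (h1 : g z₁ = 0) (h2 : g z₂ = 0) :
    ∃ f : ℂ → ℂ, FockL2Mem α f ∧
      ∀ z, z ≠ z₁ → z ≠ z₂ → f z = g z / ((z - z₁) * (z - z₂)) := by
  obtain ⟨hgd, M, hM⟩ := hg
  replace hgd : Differentiable ℂ g := hgd
  set f : ℂ → ℂ := dslope (dslope g z₁) z₂ with hf
  have hd1 : Differentiable ℂ (dslope g z₁) := by
    rw [← differentiableOn_univ] at hgd ⊢
    exact (Complex.differentiableOn_dslope (Filter.univ_mem)).mpr hgd
  have hfd : Differentiable ℂ f := by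
    rw [← differentiableOn_univ] at hd1 ⊢
    exact (Complex.differentiableOn_dslope (Filter.univ_mem)).mpr hd1
  have h12 : dslope g z₁ z₂ = 0 := by
    rw [dslope_of_ne _ hne.symm, slope_def_field, h2, h1]
    simp
  have hval : ∀ z, z ≠ z₁ → z ≠ z₂ → f z = g z / ((z - z₁) * (z - z₂)) := by
    intro z hz1 hz2
    rw [hf, dslope_of_ne _ hz2, slope_def_field, h12, dslope_of_ne _ hz1, slope_def_field, h1]
    field_simp
    ring
  refine ⟨f, ⟨hfd, ?_⟩, hval⟩
  -- integrability
  have hMnn : 0 ≤ M := le_trans (by positivity) (hM 0)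
  set R : ℝ := 2 * ‖z₁‖ + 2 * ‖z₂‖ + 2 with hR
  have hR2 : 2 ≤ R := by have := norm_nonneg z₁; have := norm_nonneg z₂; linarith
  obtain ⟨C₀, hC₀⟩ := (isCompact_closedBall (0:ℂ) R).exists_bound_of_continuousOn
    hfd.continuous.continuousOn
  set C₁ : ℝ := max C₀ 0 with hC₁
  set C : ℝ := max (C₁ ^ 2 * (1 + R) ^ 4) (256 * M ^ 2) with hC
  have hCnn : 0 ≤ C := le_trans (by positivity) (le_max_left _ _)
  have key : ∀ z : ℂ, ‖f z‖ ^ 2 * Real.exp (-α * ‖z‖ ^ 2) ≤ C / (1 + ‖z‖) ^ 4 := by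
    intro z
    have hzp : (0:ℝ) < 1 + ‖z‖ := by positivity
    have hexp1 : Real.exp (-α * ‖z‖ ^ 2) ≤ 1 :=
      Real.exp_le_one_iff.2 (by nlinarith [sq_nonneg ‖z‖])
    rcases le_or_gt ‖z‖ R with hle | hgt
    · -- inside the ball
      have hfz : ‖f z‖ ≤ C₁ :=
        le_trans (hC₀ z (by simpa [Metric.mem_closedBall, dist_eq_norm] using hle))
          (le_max_left _ _)
      have h1' : ‖f z‖ ^ 2 * Real.exp (-α * ‖z‖ ^ 2) ≤ C₁ ^ 2 := by
        have : ‖f z‖ ^ 2 ≤ C₁ ^ 2 := by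
          have := norm_nonneg (f z); nlinarith
        nlinarith [Real.exp_pos (-α * ‖z‖ ^ 2), norm_nonneg (f z), sq_nonneg (f z).re]
      refine h1'.trans ?_
      have hnum : C₁ ^ 2 * (1 + R) ^ 4 ≤ C := le_max_left _ _
      rw [le_div_iff₀ (by positivity)]
      calc C₁ ^ 2 * (1 + ‖z‖) ^ 4 ≤ C₁ ^ 2 * (1 + R) ^ 4 := by
            apply mul_le_mul_of_nonneg_left _ (by positivity)
            apply pow_le_pow_left₀ (by positivity) (by linarith)
        _ ≤ C := hnum
    · -- outside the ball
      rw [hR] at hgt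
      have hz1 : ‖z‖ / 2 ≤ ‖z - z₁‖ := by
        have := norm_sub_norm_le z z₁
        have h' : ‖z‖ - ‖z₁‖ ≤ ‖z - z₁‖ := by
          have := norm_sub_norm_le z z₁; linarith [le_abs_self (‖z‖ - ‖z₁‖), abs_norm_sub_norm_le z z₁]
        have : ‖z₁‖ ≤ ‖z‖ / 2 := by
          have := norm_nonneg z₂; linarith
        linarith
      have hz2 : ‖z‖ / 2 ≤ ‖z - z₂‖ := by
        have h' : ‖z‖ - ‖z₂‖ ≤ ‖z - z₂‖ := by
          linarith [le_abs_self (‖z‖ - ‖z₂‖), abs_norm_sub_norm_le z z₂]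
        have : ‖z₂‖ ≤ ‖z‖ / 2 := by
          have := norm_nonneg z₁; linarith
        linarith
      have hzR : (2:ℝ) ≤ ‖z‖ := le_trans hR2 hgt.le
      have hz0 : (0:ℝ) < ‖z‖ := by linarith
      have hne1 : z ≠ z₁ := by
        intro h; rw [h] at hgt
        have := norm_nonneg z₂; linarith
      have hne2 : z ≠ z₂ := by
        intro h; rw [h] at hgt
        have := norm_nonneg z₁; linarith
      have hfeq : ‖f z‖ = ‖g z‖ / (‖z - z₁‖ * ‖z - z₂‖) := by
        rw [hval z hne1 hne2, norm_div, norm_mul]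
      have hgb : ‖g z‖ ^ 2 * Real.exp (-α * ‖z‖ ^ 2) ≤ M ^ 2 := by
        have h := hM z
        have hepos := Real.exp_pos (-α * ‖z‖ ^ 2 / 2)
        have hsq : (Real.exp (-α * ‖z‖ ^ 2 / 2) * ‖g z‖) ^ 2 ≤ M ^ 2 :=
          pow_le_pow_left₀ (by positivity) h 2
        calc ‖g z‖ ^ 2 * Real.exp (-α * ‖z‖ ^ 2)
            = (Real.exp (-α * ‖z‖ ^ 2 / 2) * ‖g z‖) ^ 2 := by
              rw [mul_pow, ← Real.exp_nat_mul]
              ring_nf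
          _ ≤ M ^ 2 := hsq
      have ha0 : (0:ℝ) < ‖z - z₁‖ := lt_of_lt_of_le (by linarith) hz1
      have hb0 : (0:ℝ) < ‖z - z₂‖ := lt_of_lt_of_le (by linarith) hz2
      have step1 : ‖f z‖ ^ 2 * Real.exp (-α * ‖z‖ ^ 2)
          = ‖g z‖ ^ 2 * Real.exp (-α * ‖z‖ ^ 2) / (‖z - z₁‖ ^ 2 * ‖z - z₂‖ ^ 2) := by
        rw [hfeq]; field_simp
      rw [step1]
      have hd : (‖z‖/2)^2 * (‖z‖/2)^2 ≤ ‖z - z₁‖^2 * ‖z - z₂‖^2 :=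
        mul_le_mul (pow_le_pow_left₀ (by positivity) hz1 2)
          (pow_le_pow_left₀ (by positivity) hz2 2) (by positivity) (by positivity)
      have h16 : (1+‖z‖)^4 ≤ 16 * ‖z‖^4 := by
        have h' := pow_le_pow_left₀ hzp.le (show 1+‖z‖ ≤ 2*‖z‖ by linarith) 4
        calc (1+‖z‖)^4 ≤ (2*‖z‖)^4 := h'
          _ = 16*‖z‖^4 := by ring
      calc ‖g z‖ ^ 2 * Real.exp (-α * ‖z‖ ^ 2) / (‖z - z₁‖ ^ 2 * ‖z - z₂‖ ^ 2)
          ≤ M^2 / ((‖z‖/2)^2 * (‖z‖/2)^2) := div_le_div₀ (by positivity) hgb (by positivity) hd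
        _ = 256 * M^2 / (16 * ‖z‖^4) := by
            rw [div_eq_div_iff (by positivity) (by positivity)]; ring
        _ ≤ C / (1+‖z‖)^4 := by
            apply div_le_div₀ hCnn (le_max_right _ _) (by positivity)
            linarith
  -- conclude integrability by domination
  have hcont : Continuous fun z : ℂ => ‖f z‖ ^ 2 * Real.exp (-α * ‖z‖ ^ 2) := by
    apply Continuous.mul
    · exact (hfd.continuous.norm).pow 2
    · exact Real.continuous_exp.comp (continuous_const.mul ((continuous_norm).pow 2))
  have hint2 : Integrable (fun z : ℂ => C / (1 + ‖z‖) ^ 4) volume := by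
    have hlt : ((Module.finrank ℝ ℂ : ℝ)) < 4 := by
      rw [Complex.finrank_real_complex]; norm_num
    have h := (integrable_one_add_norm (E := ℂ) (μ := volume) hlt).const_mul C
    refine h.congr (Filter.Eventually.of_forall fun z => ?_)
    show C * (1+‖z‖) ^ (-(4:ℝ)) = C / (1+‖z‖) ^ 4
    rw [Real.rpow_neg (by positivity), ← Real.rpow_natCast (1+‖z‖) 4]
    norm_num [div_eq_mul_inv]
  refine hint2.mono' hcont.aestronglyMeasurable (Filter.Eventually.of_forall fun z => ?_)
  rw [Real.norm_eq_abs, abs_of_nonneg (by positivity)]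
  exact key z
end

section
/- The lower and upper uniform densities D⁻(Γ) = liminf_{r→∞} n⁻(r)/r² and D⁺(Γ) = limsup_{r→∞} n⁺(r)/r² of a uniformly discrete set Γ ⊂ ℂ do not depend on the choice of the compact set I of measure 1 with boundary of measure 0 used in their definition. -/
open MeasureTheory Filter Pointwise

section LandauAux

open Metric Set MeasureTheory Filter Pointwise Bornology
open scoped ENNReal NNReal Topology

namespace LandauAux

lemma mem_image_add' {z w : ℂ} {A : Set ℂ} : z ∈ (· + w) '' A ↔ z - w ∈ A := by
  constructor
  · rintro ⟨y, hy, rfl⟩; simpa using hy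
  · intro h; exact ⟨z - w, h, by ring⟩

lemma volume_image_add (w : ℂ) (A : Set ℂ) : volume ((· + w) '' A) = volume A := by
  have h : (· + w) '' A = (· + (-w)) ⁻¹' A := by
    ext z; simp [mem_image_add', Set.mem_preimage, sub_eq_add_neg]
  rw [h, measure_preimage_add_right]

lemma infEdist_image_add (x w : ℂ) (A : Set ℂ) :
    Metric.infEDist x ((· + w) '' A) = Metric.infEDist (x - w) A := by
  have h := EMetric.infEdist_image (x := x - w) (t := A) (IsometryEquiv.addRight w).isometry
  simpa using h

lemma cthickening_image_add (δ : ℝ) (w : ℂ) (A : Set ℂ) :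
    cthickening δ ((· + w) '' A) = (· + w) '' cthickening δ A := by
  ext x
  simp only [Metric.mem_cthickening_iff, mem_image_add', infEdist_image_add]

lemma isBounded_image_add (w : ℂ) {A : Set ℂ} (hA : IsBounded A) :
    IsBounded ((· + w) '' A) :=
  (IsometryEquiv.addRight w).isometry.lipschitz.isBounded_image hA

/-- A preconnected set meeting both a set and its complement meets its frontier. -/
lemma inter_frontier_nonempty {t S : Set ℂ} (ht : IsPreconnected t)
    (h1 : (t ∩ S).Nonempty) (h2 : (t \ S).Nonempty) : (t ∩ frontier S).Nonempty := by
  by_contra hcon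
  rw [Set.not_nonempty_iff_eq_empty] at hcon
  have hfr : ∀ x ∈ t, x ∉ frontier S := by
    intro x hx hxf
    exact (Set.eq_empty_iff_forall_notMem.1 hcon x) ⟨hx, hxf⟩
  have hsub : t ⊆ interior S ∪ (closure S)ᶜ := by
    intro x hx
    by_cases hxS : x ∈ closure S
    · left
      by_contra hxi
      exact hfr x hx ⟨hxS, hxi⟩
    · right; exact hxS
  have hne1 : (t ∩ interior S).Nonempty := by
    obtain ⟨x, hxt, hxS⟩ := h1
    refine ⟨x, hxt, ?_⟩
    by_contra hxi
    exact hfr x hxt ⟨subset_closure hxS, hxi⟩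
  have hne2 : (t ∩ (closure S)ᶜ).Nonempty := by
    obtain ⟨y, hyt, hyS⟩ := h2
    refine ⟨y, hyt, ?_⟩
    intro hyc
    by_cases hyi : y ∈ interior S
    · exact hyS (interior_subset hyi)
    · exact hfr y hyt ⟨hyc, hyi⟩
  obtain ⟨x, _, hxi, hxc⟩ :=
    ht (interior S) (closure S)ᶜ isOpen_interior isClosed_closure.isOpen_compl hsub hne1 hne2
  exact hxc (subset_closure (interior_subset hxi))

lemma finite_inter {Γ : Set ℂ} {q : ℝ} (hq : 0 < q)
    (hsep : ∀ z ∈ Γ, ∀ w ∈ Γ, z ≠ w → q ≤ dist z w)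
    {T : Set ℂ} (hT : IsBounded T) : (Γ ∩ T).Finite := by
  rw [← Set.not_infinite]
  intro hinf
  obtain ⟨x, -, hx⟩ := hinf.exists_accPt_of_subset_isCompact hT.isCompact_closure
    (Set.inter_subset_right.trans subset_closure)
  rw [accPt_iff_nhds] at hx
  obtain ⟨y₁, hy₁, hy₁x⟩ := hx (ball x (q / 2)) (ball_mem_nhds x (by positivity))
  obtain ⟨y₂, hy₂, hy₂x⟩ := hx (ball x (dist y₁ x)) (ball_mem_nhds x (dist_pos.2 hy₁x))
  have hne : y₂ ≠ y₁ := by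
    intro h
    have h1 := hy₂.1
    rw [h, mem_ball] at h1
    exact lt_irrefl _ h1
  have h1 : dist y₁ x < q / 2 := mem_ball.1 hy₁.1
  have h2 : dist y₂ x < q / 2 := lt_trans (mem_ball.1 hy₂.1) h1
  have hsep' := hsep y₁ hy₁.2.1 y₂ hy₂.2.1 (fun h => hne h.symm)
  have : dist y₁ y₂ < q := by
    calc dist y₁ y₂ ≤ dist y₁ x + dist x y₂ := dist_triangle _ _ _
      _ < q / 2 + q / 2 := by rw [dist_comm x y₂]; exact add_lt_add h1 h2
      _ = q := by ring
  linarith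

lemma card_mul_le {Γ : Set ℂ} {q : ℝ} (hq : 0 < q)
    (hsep : ∀ z ∈ Γ, ∀ w ∈ Γ, z ≠ w → q ≤ dist z w)
    {T : Set ℂ} (hT : IsBounded T) :
    ((Γ ∩ T).ncard : ℝ≥0∞) * volume (ball (0 : ℂ) (q / 2)) ≤ volume (cthickening (q / 2) T) := by
  classical
  have hfin := finite_inter hq hsep hT
  have hcard : (Γ ∩ T).ncard = hfin.toFinset.card := Set.ncard_eq_toFinset_card _ hfin
  have hdisj : Set.PairwiseDisjoint (↑hfin.toFinset : Set ℂ) (fun z => ball z (q / 2)) := by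
    intro a ha b hb hab
    rw [Set.Finite.coe_toFinset] at ha hb
    refine Set.disjoint_left.2 fun x hxa hxb => ?_
    have hd : dist a b < q := by
      calc dist a b ≤ dist a x + dist x b := dist_triangle _ _ _
        _ < q / 2 + q / 2 := add_lt_add (by rw [dist_comm]; exact mem_ball.1 hxa) (mem_ball.1 hxb)
        _ = q := by ring
    exact absurd (hsep a ha.1 b hb.1 hab) (by linarith)
  have hU : volume (⋃ z ∈ hfin.toFinset, ball z (q / 2))
      = ∑ z ∈ hfin.toFinset, volume (ball z (q / 2)) :=
    measure_biUnion_finset hdisj fun _ _ => measurableSet_ball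
  have hsub : (⋃ z ∈ hfin.toFinset, ball z (q / 2)) ⊆ cthickening (q / 2) T := by
    simp only [Set.iUnion_subset_iff]
    intro z hz x hx
    rw [Set.Finite.mem_toFinset] at hz
    exact mem_cthickening_of_dist_le x z (q / 2) T hz.2 (le_of_lt (mem_ball.1 hx))
  calc ((Γ ∩ T).ncard : ℝ≥0∞) * volume (ball (0 : ℂ) (q / 2))
      = ∑ _z ∈ hfin.toFinset, volume (ball (0 : ℂ) (q / 2)) := by
        rw [Finset.sum_const, hcard, nsmul_eq_mul]
    _ = ∑ z ∈ hfin.toFinset, volume (ball z (q / 2)) := by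
        refine Finset.sum_congr rfl fun z _ => ?_
        exact (Measure.addHaar_ball_center volume z (q / 2)).symm
    _ = volume (⋃ z ∈ hfin.toFinset, ball z (q / 2)) := hU.symm
    _ ≤ volume (cthickening (q / 2) T) := measure_mono hsub

lemma card_le_const {Γ : Set ℂ} {q : ℝ} (hq : 0 < q)
    (hsep : ∀ z ∈ Γ, ∀ w ∈ Γ, z ≠ w → q ≤ dist z w)
    {J : Set ℂ} (hJ : IsBounded J) :
    ∀ w : ℂ, ((Γ ∩ ((· + w) '' J)).ncard : ℝ)
      ≤ (volume (cthickening (q / 2) J)).toReal / (volume (ball (0 : ℂ) (q / 2))).toReal := by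
  intro w
  set vb := volume (ball (0 : ℂ) (q / 2)) with hvb
  have hvb0 : vb ≠ 0 := (measure_ball_pos volume 0 (by positivity)).ne'
  have hvbt : vb ≠ ⊤ := measure_ball_lt_top.ne
  have hVt : volume (cthickening (q / 2) J) ≠ ⊤ := hJ.cthickening.measure_lt_top.ne
  have h1 := card_mul_le hq hsep (isBounded_image_add w hJ)
  rw [cthickening_image_add, volume_image_add] at h1
  have h2 : ((Γ ∩ ((· + w) '' J)).ncard : ℝ) * vb.toReal
      ≤ (volume (cthickening (q / 2) J)).toReal := by
    have h3 := ENNReal.toReal_mono hVt h1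
    rwa [ENNReal.toReal_mul, ENNReal.toReal_natCast] at h3
  rw [le_div_iff₀ (ENNReal.toReal_pos hvb0 hvbt)]
  exact h2

lemma bddAbove_card {Γ : Set ℂ} {q : ℝ} (hq : 0 < q)
    (hsep : ∀ z ∈ Γ, ∀ w ∈ Γ, z ≠ w → q ≤ dist z w)
    {J : Set ℂ} (hJ : IsBounded J) :
    BddAbove (Set.range fun w : ℂ => ((Γ ∩ ((· + w) '' J)).ncard : ℝ)) := by
  refine ⟨(volume (cthickening (q / 2) J)).toReal / (volume (ball (0 : ℂ) (q / 2))).toReal, ?_⟩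
  rintro x ⟨w, rfl⟩
  exact card_le_const hq hsep hJ w

lemma bddBelow_card (Γ : Set ℂ) (J : Set ℂ) :
    BddBelow (Set.range fun w : ℂ => ((Γ ∩ ((· + w) '' J)).ncard : ℝ)) := by
  refine ⟨0, ?_⟩
  rintro x ⟨w, rfl⟩
  exact Nat.cast_nonneg _

lemma cthickening_smul_subset {δ r : ℝ} (hr : 0 < r) (K : Set ℂ) :
    cthickening δ (r • K) ⊆ r • cthickening (δ / r) K := by
  intro x hx
  rw [Metric.mem_cthickening_iff] at hx
  refine ⟨r⁻¹ • x, ?_, smul_inv_smul₀ (ne_of_gt hr) x⟩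
  rw [Metric.mem_cthickening_iff]
  have h1 : Metric.infEDist ((r : ℝ) • (r⁻¹ • x)) (r • K)
      = ‖(r : ℝ)‖₊ • Metric.infEDist (r⁻¹ • x) K := infEdist_smul₀ (ne_of_gt hr) K _
  rw [smul_inv_smul₀ (ne_of_gt hr) x] at h1
  have h2 : (‖(r : ℝ)‖₊ : ℝ≥0∞) * Metric.infEDist (r⁻¹ • x) K ≤ ENNReal.ofReal δ := by
    rw [← smul_eq_mul, ← ENNReal.smul_def, ← h1]
    exact hx
  rw [← enorm_eq_nnnorm, Real.enorm_eq_ofReal hr.le] at h2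
  rw [ENNReal.ofReal_div_of_pos hr]
  rw [ENNReal.le_div_iff_mul_le (Or.inl (ENNReal.ofReal_pos.2 hr).ne') (Or.inl ENNReal.ofReal_ne_top)]
  rw [mul_comm]
  exact h2

lemma eventually_cthick_vol {K : Set ℂ} (hK : IsCompact K) {δ : ℝ} (hδ : 0 < δ) {c : ℝ}
    (hc : volume K < ENNReal.ofReal c) :
    ∀ᶠ r : ℝ in atTop,
      volume (cthickening δ (r • K)) ≤ ENNReal.ofReal c * ENNReal.ofReal (r ^ 2) := by
  have ht := tendsto_measure_cthickening_of_isCompact (μ := volume) hK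
  have hev : ∀ᶠ t : ℝ in 𝓝 0, volume (cthickening t K) < ENNReal.ofReal c :=
    ht.eventually_lt_const hc
  obtain ⟨η, hη, hball⟩ := Metric.eventually_nhds_iff.1 hev
  filter_upwards [eventually_ge_atTop (max 1 (2 * δ / η))] with r hr
  have hr1 : (1 : ℝ) ≤ r := le_trans (le_max_left _ _) hr
  have hr0 : (0 : ℝ) < r := lt_of_lt_of_le one_pos hr1
  have h2 : 2 * δ / η ≤ r := le_trans (le_max_right _ _) hr
  have h2' : 2 * δ ≤ r * η := by
    rw [div_le_iff₀ hη] at h2; linarith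
  have hδr : dist (δ / r) 0 < η := by
    rw [Real.dist_eq, sub_zero, abs_of_pos (by positivity)]
    rw [div_lt_iff₀ hr0]
    nlinarith
  calc volume (cthickening δ (r • K)) ≤ volume (r • cthickening (δ / r) K) :=
        measure_mono (cthickening_smul_subset hr0 K)
    _ = ENNReal.ofReal |r ^ 2| * volume (cthickening (δ / r) K) := by
        rw [Measure.addHaar_smul, Complex.finrank_real_complex]
    _ ≤ ENNReal.ofReal (r ^ 2) * ENNReal.ofReal c := by
        rw [abs_of_nonneg (sq_nonneg r)]
        exact mul_le_mul_right (hball hδr).le _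
    _ = ENNReal.ofReal c * ENNReal.ofReal (r ^ 2) := mul_comm _ _

lemma eventually_card_le {Γ : Set ℂ} {q : ℝ} (hq : 0 < q)
    (hsep : ∀ z ∈ Γ, ∀ w ∈ Γ, z ≠ w → q ≤ dist z w)
    {I : Set ℂ} (hc : IsCompact I) :
    ∃ C : ℝ, 0 ≤ C ∧ ∀ᶠ r : ℝ in atTop, ∀ w : ℂ,
      ((Γ ∩ ((· + w) '' (r • I))).ncard : ℝ) ≤ C * r ^ 2 := by
  classical
  set vb := volume (ball (0 : ℂ) (q / 2)) with hvb
  have hvb0 : vb ≠ 0 := (measure_ball_pos volume 0 (by positivity)).ne'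
  have hvbt : vb ≠ ⊤ := measure_ball_lt_top.ne
  set V := volume (cthickening (q / 2) I) with hV
  have hVt : V ≠ ⊤ := hc.isBounded.cthickening.measure_lt_top.ne
  refine ⟨V.toReal / vb.toReal, by positivity, ?_⟩
  filter_upwards [eventually_ge_atTop 1] with r hr w
  have hr0 : (0 : ℝ) < r := lt_of_lt_of_le one_pos hr
  have h1 := card_mul_le hq hsep (T := (· + w) '' (r • I))
    (isBounded_image_add w (hc.smul r).isBounded)
  rw [cthickening_image_add, volume_image_add] at h1
  have hsub : cthickening (q / 2) (r • I) ⊆ r • cthickening (q / 2) I := by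
    refine (cthickening_smul_subset hr0 I).trans ?_
    apply Set.smul_set_mono
    apply cthickening_mono
    rw [div_le_div_iff₀ (by positivity) (by norm_num)]
    nlinarith
  have h2 : volume (cthickening (q / 2) (r • I)) ≤ ENNReal.ofReal (r ^ 2) * V := by
    calc volume (cthickening (q / 2) (r • I)) ≤ volume (r • cthickening (q / 2) I) :=
          measure_mono hsub
      _ = ENNReal.ofReal |r ^ 2| * V := by
          rw [Measure.addHaar_smul, Complex.finrank_real_complex]
      _ = ENNReal.ofReal (r ^ 2) * V := by rw [abs_of_nonneg (sq_nonneg r)]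
  have h3 : ((Γ ∩ ((· + w) '' (r • I))).ncard : ℝ≥0∞) * vb ≤ ENNReal.ofReal (r ^ 2) * V :=
    h1.trans h2
  have h4 : ((Γ ∩ ((· + w) '' (r • I))).ncard : ℝ) * vb.toReal ≤ r ^ 2 * V.toReal := by
    have h5 := ENNReal.toReal_mono
      (by exact ENNReal.mul_ne_top ENNReal.ofReal_ne_top hVt) h3
    rwa [ENNReal.toReal_mul, ENNReal.toReal_mul, ENNReal.toReal_natCast,
      ENNReal.toReal_ofReal (sq_nonneg r)] at h5
  rw [div_mul_eq_mul_div, le_div_iff₀ (ENNReal.toReal_pos hvb0 hvbt)]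
  nlinarith [ENNReal.toReal_nonneg (a := V)]

lemma lintegral_card {F : Set ℂ} (hF : F.Finite) {J : Set ℂ} (hJ : IsCompact J) :
    (∫⁻ w : ℂ, ((F ∩ ((· + w) '' J)).ncard : ℝ≥0∞))
      = (F.ncard : ℝ≥0∞) * volume J := by
  classical
  have hmem : ∀ (z w : ℂ), w ∈ (fun y => z - y) '' J ↔ z - w ∈ J := by
    intro z w
    constructor
    · rintro ⟨y, hy, rfl⟩; simpa using hy
    · intro h; exact ⟨z - w, h, by ring⟩
  have hmble : ∀ z : ℂ, MeasurableSet ((fun y => z - y) '' J) := fun z =>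
    (hJ.image (continuous_const.sub continuous_id)).isClosed.measurableSet
  have hvol : ∀ z : ℂ, volume ((fun y => z - y) '' J) = volume J := by
    intro z
    have h : (fun y => z - y) '' J = (· + z) '' (-J) := by
      ext x
      rw [mem_image_add', Set.mem_neg, neg_sub, hmem]
    rw [h, volume_image_add, Measure.measure_neg volume J]
  have hpt : ∀ w : ℂ, ((F ∩ ((· + w) '' J)).ncard : ℝ≥0∞)
      = ∑ z ∈ hF.toFinset, ((fun y => z - y) '' J).indicator (fun _ => (1 : ℝ≥0∞)) w := by
    intro w
    have hset : F ∩ ((· + w) '' J) = ↑(hF.toFinset.filter (fun z => z - w ∈ J)) := by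
      ext z
      simp only [Set.mem_inter_iff, Finset.coe_filter, Set.Finite.mem_toFinset, Set.mem_setOf_eq,
        mem_image_add']
    rw [hset, Set.ncard_coe_finset, Finset.card_filter]
    push_cast
    refine Finset.sum_congr rfl fun z _ => ?_
    by_cases h : z - w ∈ J
    · rw [if_pos h, Set.indicator_of_mem ((hmem z w).2 h)]
    · rw [if_neg h, Set.indicator_of_notMem (fun hw => h ((hmem z w).1 hw))]
  calc (∫⁻ w : ℂ, ((F ∩ ((· + w) '' J)).ncard : ℝ≥0∞))
      = ∫⁻ w, ∑ z ∈ hF.toFinset, ((fun y => z - y) '' J).indicator (fun _ => (1 : ℝ≥0∞)) w := by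
        simp_rw [hpt]
    _ = ∑ z ∈ hF.toFinset, ∫⁻ w, ((fun y => z - y) '' J).indicator (fun _ => (1 : ℝ≥0∞)) w :=
        lintegral_finset_sum _ (fun z _ => measurable_const.indicator (hmble z))
    _ = ∑ z ∈ hF.toFinset, volume ((fun y => z - y) '' J) := by
        refine Finset.sum_congr rfl fun z _ => ?_
        rw [lintegral_indicator_const (hmble z), one_mul]
    _ = hF.toFinset.card * volume J := by
        rw [Finset.sum_congr rfl fun z _ => hvol z, Finset.sum_const, nsmul_eq_mul]
    _ = (F.ncard : ℝ≥0∞) * volume J := by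
        rw [Set.ncard_eq_toFinset_card _ hF]

end LandauAux

end LandauAux

section LandauMain

open Metric Set MeasureTheory Filter Pointwise Bornology
open scoped ENNReal NNReal Topology

namespace LandauAux

lemma nMax_eq (Γ I : Set ℂ) (r : ℝ) :
    nMax Γ I r = ⨆ w : ℂ, ((Γ ∩ ((· + w) '' (r • I))).ncard : ℝ) := rfl

lemma nMin_eq (Γ I : Set ℂ) (r : ℝ) :
    nMin Γ I r = ⨅ w : ℂ, ((Γ ∩ ((· + w) '' (r • I))).ncard : ℝ) := rfl

lemma upperDensity_eq (Γ I : Set ℂ) :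
    upperDensity Γ I = limsup (fun r : ℝ => nMax Γ I r / r ^ 2) atTop := rfl

lemma lowerDensity_eq (Γ I : Set ℂ) :
    lowerDensity Γ I = liminf (fun r : ℝ => nMin Γ I r / r ^ 2) atTop := rfl

lemma nMax_nonneg (Γ I : Set ℂ) (r : ℝ) : 0 ≤ nMax Γ I r := by
  rw [nMax_eq]
  exact Real.iSup_nonneg fun w => Nat.cast_nonneg _

lemma nMin_nonneg (Γ I : Set ℂ) (r : ℝ) : 0 ≤ nMin Γ I r := by
  rw [nMin_eq]
  exact Real.iInf_nonneg fun w => Nat.cast_nonneg _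

lemma key_upper {Γ : Set ℂ} {q : ℝ} (hq : 0 < q)
    (hsep : ∀ z ∈ Γ, ∀ w ∈ Γ, z ≠ w → q ≤ dist z w)
    {I₁ I₂ : Set ℂ} (h1c : IsCompact I₁) (h2c : IsCompact I₂)
    (h1m : volume I₁ = 1) (h2m : volume I₂ = 1)
    {s ε : ℝ} (hs : 1 ≤ s) (hε : 0 < ε) :
    ∀ᶠ r : ℝ in atTop, nMax Γ I₂ r / r ^ 2 ≤ (1 + ε) * (nMax Γ I₁ s / s ^ 2) := by
  obtain ⟨R₀, hIR₀⟩ := h1c.isBounded.subset_closedBall 0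
  set R₁ := max R₀ 1 with hR₁def
  have hR₁ : (0 : ℝ) < R₁ := lt_of_lt_of_le one_pos (le_max_right _ _)
  have hIR : I₁ ⊆ closedBall 0 R₁ :=
    hIR₀.trans (closedBall_subset_closedBall (le_max_left _ _))
  have hs0 : (0 : ℝ) < s := lt_of_lt_of_le one_pos hs
  have hδ : (0 : ℝ) < s * R₁ := by positivity
  have hc2 : volume I₂ < ENNReal.ofReal (1 + ε) := by
    rw [h2m, show (1 : ℝ≥0∞) = ENNReal.ofReal 1 by simp]
    exact (ENNReal.ofReal_lt_ofReal_iff (by linarith)).2 (by linarith)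
  filter_upwards [eventually_cthick_vol h2c hδ hc2, eventually_ge_atTop 1] with r hvol hr
  have hr0 : (0 : ℝ) < r := lt_of_lt_of_le one_pos hr
  set M := nMax Γ I₁ s with hMdef
  have hM0 : 0 ≤ M := nMax_nonneg Γ I₁ s
  have hnorm : ∀ y ∈ s • I₁, ‖y‖ ≤ s * R₁ := by
    rintro y ⟨v, hv, rfl⟩
    have hv' := mem_closedBall_zero_iff.1 (hIR hv)
    calc ‖s • v‖ = |s| * ‖v‖ := by rw [norm_smul, Real.norm_eq_abs]
      _ ≤ s * R₁ := by
          rw [abs_of_nonneg hs0.le]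
          exact mul_le_mul_of_nonneg_left hv' hs0.le
  have key : ∀ w₀ : ℂ,
      ((Γ ∩ ((· + w₀) '' (r • I₂))).ncard : ℝ) * s ^ 2 ≤ M * ((1 + ε) * r ^ 2) := by
    intro w₀
    have hT2bdd : IsBounded ((· + w₀) '' (r • I₂)) :=
      isBounded_image_add w₀ (h2c.smul r).isBounded
    set F := Γ ∩ ((· + w₀) '' (r • I₂)) with hFdef
    have hFfin : F.Finite := finite_inter hq hsep hT2bdd
    have hid := lintegral_card hFfin (h1c.smul s)
    have hvolJ : volume (s • I₁) = ENNReal.ofReal (s ^ 2) := by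
      rw [Measure.addHaar_smul, Complex.finrank_real_complex, h1m, mul_one,
        abs_of_nonneg (sq_nonneg s)]
    set Supp := cthickening (s * R₁) ((· + w₀) '' (r • I₂)) with hSuppdef
    have hSm : MeasurableSet Supp := isClosed_cthickening.measurableSet
    have hbnd : ∀ w : ℂ, ((F ∩ ((· + w) '' (s • I₁))).ncard : ℝ≥0∞)
        ≤ Supp.indicator (fun _ => ENNReal.ofReal M) w := by
      intro w
      by_cases hw : w ∈ Supp
      · rw [Set.indicator_of_mem hw]
        have hbdd1 : IsBounded ((· + w) '' (s • I₁)) :=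
          isBounded_image_add w (h1c.smul s).isBounded
        have hfin' : (Γ ∩ ((· + w) '' (s • I₁))).Finite := finite_inter hq hsep hbdd1
        have h1 : (F ∩ ((· + w) '' (s • I₁))).ncard ≤ (Γ ∩ ((· + w) '' (s • I₁))).ncard :=
          Set.ncard_le_ncard (fun z hz => ⟨hz.1.1, hz.2⟩) hfin'
        have h2 : ((Γ ∩ ((· + w) '' (s • I₁))).ncard : ℝ) ≤ M := by
          rw [hMdef, nMax_eq]
          exact le_ciSup (bddAbove_card hq hsep (h1c.smul s).isBounded) w
        calc ((F ∩ ((· + w) '' (s • I₁))).ncard : ℝ≥0∞)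
            = ENNReal.ofReal ((F ∩ ((· + w) '' (s • I₁))).ncard : ℝ) :=
              (ENNReal.ofReal_natCast _).symm
          _ ≤ ENNReal.ofReal M :=
              ENNReal.ofReal_le_ofReal (le_trans (by exact_mod_cast h1) h2)
      · rw [Set.indicator_of_notMem hw]
        have hempty : F ∩ ((· + w) '' (s • I₁)) = ∅ := by
          rw [Set.eq_empty_iff_forall_notMem]
          rintro z ⟨hzF, hz1⟩
          apply hw
          have hy : z - w ∈ s • I₁ := mem_image_add'.1 hz1
          have hdist : dist w z ≤ s * R₁ := by
            rw [dist_eq_norm, norm_sub_rev]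
            exact hnorm _ hy
          exact mem_cthickening_of_dist_le w z (s * R₁) _ hzF.2 hdist
        rw [hempty]
        simp
    have hStep : (F.ncard : ℝ≥0∞) * ENNReal.ofReal (s ^ 2)
        ≤ ENNReal.ofReal M * volume Supp := by
      calc (F.ncard : ℝ≥0∞) * ENNReal.ofReal (s ^ 2)
          = ∫⁻ w : ℂ, ((F ∩ ((· + w) '' (s • I₁))).ncard : ℝ≥0∞) := by rw [hid, hvolJ]
        _ ≤ ∫⁻ w : ℂ, Supp.indicator (fun _ => ENNReal.ofReal M) w :=
            lintegral_mono fun w => hbnd w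
        _ = ENNReal.ofReal M * volume Supp := lintegral_indicator_const hSm _
    have hSv : volume Supp ≤ ENNReal.ofReal (1 + ε) * ENNReal.ofReal (r ^ 2) := by
      rw [hSuppdef, cthickening_image_add, volume_image_add]
      exact hvol
    have hfinal : ENNReal.ofReal ((F.ncard : ℝ) * s ^ 2)
        ≤ ENNReal.ofReal (M * ((1 + ε) * r ^ 2)) := by
      calc ENNReal.ofReal ((F.ncard : ℝ) * s ^ 2)
          = (F.ncard : ℝ≥0∞) * ENNReal.ofReal (s ^ 2) := by
            rw [ENNReal.ofReal_mul (Nat.cast_nonneg _), ENNReal.ofReal_natCast]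
        _ ≤ ENNReal.ofReal M * volume Supp := hStep
        _ ≤ ENNReal.ofReal M * (ENNReal.ofReal (1 + ε) * ENNReal.ofReal (r ^ 2)) :=
            mul_le_mul_right hSv _
        _ = ENNReal.ofReal (M * ((1 + ε) * r ^ 2)) := by
            rw [← ENNReal.ofReal_mul (by positivity : (0:ℝ) ≤ 1 + ε),
              ← ENNReal.ofReal_mul hM0]
    exact (ENNReal.ofReal_le_ofReal_iff (mul_nonneg hM0 (by positivity))).1 hfinal
  have hsup : nMax Γ I₂ r ≤ M * ((1 + ε) * r ^ 2) / s ^ 2 := by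
    rw [nMax_eq]
    refine ciSup_le fun w₀ => ?_
    rw [le_div_iff₀ (by positivity : (0:ℝ) < s ^ 2)]
    exact key w₀
  rw [div_le_iff₀ (by positivity : (0:ℝ) < r ^ 2)]
  calc nMax Γ I₂ r ≤ M * ((1 + ε) * r ^ 2) / s ^ 2 := hsup
    _ = (1 + ε) * (M / s ^ 2) * r ^ 2 := by ring

lemma key_lower {Γ : Set ℂ} {q : ℝ} (hq : 0 < q)
    (hsep : ∀ z ∈ Γ, ∀ w ∈ Γ, z ≠ w → q ≤ dist z w)
    {I₁ I₂ : Set ℂ} (h1c : IsCompact I₁) (h2c : IsCompact I₂)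
    (h1m : volume I₁ = 1) (h2m : volume I₂ = 1) (h2b : volume (frontier I₂) = 0)
    {s ε : ℝ} (hs : 1 ≤ s) (hε : 0 < ε) (hε1 : ε < 1) :
    ∀ᶠ r : ℝ in atTop, (1 - ε) * (nMin Γ I₁ s / s ^ 2) ≤ nMin Γ I₂ r / r ^ 2 := by
  obtain ⟨R₀, hIR₀⟩ := h1c.isBounded.subset_closedBall 0
  set R₁ := max R₀ 1 with hR₁def
  have hR₁ : (0 : ℝ) < R₁ := lt_of_lt_of_le one_pos (le_max_right _ _)
  have hIR : I₁ ⊆ closedBall 0 R₁ :=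
    hIR₀.trans (closedBall_subset_closedBall (le_max_left _ _))
  have hs0 : (0 : ℝ) < s := lt_of_lt_of_le one_pos hs
  have hδ : (0 : ℝ) < s * R₁ := by positivity
  have hK : IsCompact (frontier I₂) := h2c.of_isClosed_subset isClosed_frontier h2c.isClosed.frontier_subset
  have hcF : volume (frontier I₂) < ENNReal.ofReal ε := by
    rw [h2b]; exact ENNReal.ofReal_pos.2 hε
  filter_upwards [eventually_cthick_vol hK hδ hcF, eventually_ge_atTop 1] with r hvolF hr
  have hr0 : (0 : ℝ) < r := lt_of_lt_of_le one_pos hr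
  have hfr : frontier (r • I₂) = r • frontier I₂ := by
    rw [frontier, frontier, closure_smul₀' (ne_of_gt hr0), interior_smul₀ (ne_of_gt hr0),
      Set.smul_set_sdiff₀ (ne_of_gt hr0)]
  set m := nMin Γ I₁ s with hmdef
  have hm0 : 0 ≤ m := nMin_nonneg Γ I₁ s
  have hnorm : ∀ y ∈ s • I₁, ‖y‖ ≤ s * R₁ := by
    rintro y ⟨v, hv, rfl⟩
    have hv' := mem_closedBall_zero_iff.1 (hIR hv)
    calc ‖s • v‖ = |s| * ‖v‖ := by rw [norm_smul, Real.norm_eq_abs]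
      _ ≤ s * R₁ := by
          rw [abs_of_nonneg hs0.le]
          exact mul_le_mul_of_nonneg_left hv' hs0.le
  have key : ∀ w₀ : ℂ,
      m * ((1 - ε) * r ^ 2) ≤ ((Γ ∩ ((· + w₀) '' (r • I₂))).ncard : ℝ) * s ^ 2 := by
    intro w₀
    have hT2bdd : IsBounded ((· + w₀) '' (r • I₂)) :=
      isBounded_image_add w₀ (h2c.smul r).isBounded
    set F := Γ ∩ ((· + w₀) '' (r • I₂)) with hFdef
    have hFfin : F.Finite := finite_inter hq hsep hT2bdd
    have hid := lintegral_card hFfin (h1c.smul s)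
    have hvolJ : volume (s • I₁) = ENNReal.ofReal (s ^ 2) := by
      rw [Measure.addHaar_smul, Complex.finrank_real_complex, h1m, mul_one,
        abs_of_nonneg (sq_nonneg s)]
    set D := (r • I₂) \ cthickening (s * R₁) (frontier (r • I₂)) with hDdef
    have hDm : MeasurableSet D :=
      ((h2c.smul r).isClosed.measurableSet).diff isClosed_cthickening.measurableSet
    set W := (· + w₀) '' D with hWdef
    have hWm : MeasurableSet W := by
      have hWeq : W = (fun x => x - w₀) ⁻¹' D := by
        ext x
        rw [hWdef]
        exact mem_image_add'
      rw [hWeq]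
      exact hDm.preimage (measurable_id.sub_const w₀)
    have hsubT : ∀ w ∈ W, ((· + w) '' (s • I₁)) ⊆ (· + w₀) '' (r • I₂) := by
      intro w hw t ht
      obtain ⟨x, hx, rfl⟩ := hw
      have hy : t - (x + w₀) ∈ s • I₁ := mem_image_add'.1 ht
      have hyn : ‖t - (x + w₀)‖ ≤ s * R₁ := hnorm _ hy
      rw [mem_image_add']
      by_contra hcon
      have hxI : x ∈ r • I₂ := hx.1
      have hfar : ENNReal.ofReal (s * R₁) < EMetric.infEdist x (frontier (r • I₂)) := by
        have h4 := hx.2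
        rw [Metric.mem_cthickening_iff] at h4
        exact not_le.1 h4
      have hball : (closedBall x (s * R₁) ∩ frontier (r • I₂)).Nonempty := by
        apply inter_frontier_nonempty (convex_closedBall x (s * R₁)).isPreconnected
        · exact ⟨x, mem_closedBall_self (by positivity), hxI⟩
        · refine ⟨t - w₀, ?_, hcon⟩
          rw [mem_closedBall, dist_eq_norm, show t - w₀ - x = t - (x + w₀) by ring]
          exact hyn
      obtain ⟨p, hp1, hp2⟩ := hball
      have hcontr : EMetric.infEdist x (frontier (r • I₂)) ≤ ENNReal.ofReal (s * R₁) := by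
        calc EMetric.infEdist x (frontier (r • I₂)) ≤ edist x p :=
              EMetric.infEdist_le_edist_of_mem hp2
          _ = ENNReal.ofReal (dist x p) := by rw [edist_dist]
          _ ≤ ENNReal.ofReal (s * R₁) :=
              ENNReal.ofReal_le_ofReal (by rw [dist_comm]; exact mem_closedBall.1 hp1)
      exact absurd hcontr (not_le.2 hfar)
    have hFT : ∀ w ∈ W, (F ∩ ((· + w) '' (s • I₁))) = Γ ∩ ((· + w) '' (s • I₁)) := by
      intro w hw
      ext z
      exact ⟨fun hz => ⟨hz.1.1, hz.2⟩, fun hz => ⟨⟨hz.1, hsubT w hw hz.2⟩, hz.2⟩⟩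
    have hlow : ∀ w : ℂ, W.indicator (fun _ => ENNReal.ofReal m) w
        ≤ ((F ∩ ((· + w) '' (s • I₁))).ncard : ℝ≥0∞) := by
      intro w
      by_cases hw : w ∈ W
      · rw [Set.indicator_of_mem hw, hFT w hw]
        have h2 : m ≤ ((Γ ∩ ((· + w) '' (s • I₁))).ncard : ℝ) := by
          rw [hmdef, nMin_eq]
          exact ciInf_le (bddBelow_card Γ (s • I₁)) w
        calc ENNReal.ofReal m
            ≤ ENNReal.ofReal ((Γ ∩ ((· + w) '' (s • I₁))).ncard : ℝ) :=
              ENNReal.ofReal_le_ofReal h2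
          _ = _ := ENNReal.ofReal_natCast _
      · rw [Set.indicator_of_notMem hw]
        exact zero_le
    have hWv : volume W = volume D := volume_image_add w₀ D
    have hDv : ENNReal.ofReal ((1 - ε) * r ^ 2) ≤ volume D := by
      have hv2 : volume (r • I₂) = ENNReal.ofReal (r ^ 2) := by
        rw [Measure.addHaar_smul, Complex.finrank_real_complex, h2m, mul_one,
          abs_of_nonneg (sq_nonneg r)]
      have hsplit : volume (r • I₂)
          ≤ volume D + volume (cthickening (s * R₁) (frontier (r • I₂))) := by
        refine le_trans (measure_mono fun x hx => ?_) (measure_union_le _ _)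
        by_cases h : x ∈ cthickening (s * R₁) (frontier (r • I₂))
        · exact Or.inr h
        · exact Or.inl ⟨hx, h⟩
      have h3 : volume (cthickening (s * R₁) (frontier (r • I₂)))
          ≤ ENNReal.ofReal ε * ENNReal.ofReal (r ^ 2) := by
        rw [hfr]; exact hvolF
      have h4 : ENNReal.ofReal ((1 - ε) * r ^ 2)
          = ENNReal.ofReal (r ^ 2) - ENNReal.ofReal (ε * r ^ 2) := by
        rw [← ENNReal.ofReal_sub _ (by positivity)]
        congr 1
        ring
      rw [h4, tsub_le_iff_right]
      calc ENNReal.ofReal (r ^ 2) = volume (r • I₂) := hv2.symm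
        _ ≤ volume D + volume (cthickening (s * R₁) (frontier (r • I₂))) := hsplit
        _ ≤ volume D + ENNReal.ofReal ε * ENNReal.ofReal (r ^ 2) := add_le_add_right h3 _
        _ = volume D + ENNReal.ofReal (ε * r ^ 2) := by rw [← ENNReal.ofReal_mul hε.le]
    have hStep : ENNReal.ofReal m * volume W ≤ (F.ncard : ℝ≥0∞) * ENNReal.ofReal (s ^ 2) := by
      calc ENNReal.ofReal m * volume W
          = ∫⁻ w : ℂ, W.indicator (fun _ => ENNReal.ofReal m) w :=
            (lintegral_indicator_const hWm _).symm
        _ ≤ ∫⁻ w : ℂ, ((F ∩ ((· + w) '' (s • I₁))).ncard : ℝ≥0∞) :=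
            lintegral_mono fun w => hlow w
        _ = (F.ncard : ℝ≥0∞) * volume (s • I₁) := hid
        _ = (F.ncard : ℝ≥0∞) * ENNReal.ofReal (s ^ 2) := by rw [hvolJ]
    have hfinal : ENNReal.ofReal (m * ((1 - ε) * r ^ 2))
        ≤ ENNReal.ofReal ((F.ncard : ℝ) * s ^ 2) := by
      calc ENNReal.ofReal (m * ((1 - ε) * r ^ 2))
          = ENNReal.ofReal m * ENNReal.ofReal ((1 - ε) * r ^ 2) := ENNReal.ofReal_mul hm0
        _ ≤ ENNReal.ofReal m * volume W := by
            rw [hWv]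
            exact mul_le_mul_right hDv _
        _ ≤ (F.ncard : ℝ≥0∞) * ENNReal.ofReal (s ^ 2) := hStep
        _ = ENNReal.ofReal ((F.ncard : ℝ) * s ^ 2) := by
            rw [ENNReal.ofReal_mul (Nat.cast_nonneg _), ENNReal.ofReal_natCast]
    exact (ENNReal.ofReal_le_ofReal_iff (by positivity)).1 hfinal
  have hinf : m * ((1 - ε) * r ^ 2) / s ^ 2 ≤ nMin Γ I₂ r := by
    rw [nMin_eq]
    refine le_ciInf fun w₀ => ?_
    rw [div_le_iff₀ (by positivity : (0:ℝ) < s ^ 2)]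
    exact key w₀
  rw [le_div_iff₀ (by positivity : (0:ℝ) < r ^ 2)]
  calc (1 - ε) * (nMin Γ I₁ s / s ^ 2) * r ^ 2 = m * ((1 - ε) * r ^ 2) / s ^ 2 := by
        rw [hmdef]; ring
    _ ≤ nMin Γ I₂ r := hinf

lemma upperDensity_le {Γ : Set ℂ} (hΓ : UniformlyDiscrete Γ) {I₁ I₂ : Set ℂ}
    (h1c : IsCompact I₁) (h2c : IsCompact I₂)
    (h1m : volume I₁ = 1) (h2m : volume I₂ = 1) :
    upperDensity Γ I₂ ≤ upperDensity Γ I₁ := by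
  obtain ⟨q, hq, hsep⟩ := hΓ
  obtain ⟨C₁, hC₁0, hC₁⟩ := eventually_card_le hq hsep h1c
  have hb₁ : ∀ᶠ s : ℝ in atTop, nMax Γ I₁ s / s ^ 2 ≤ C₁ := by
    filter_upwards [hC₁, eventually_ge_atTop 1] with s hs hs1
    rw [div_le_iff₀ (by positivity)]
    rw [nMax_eq]
    exact ciSup_le fun w => hs w
  have hbdd₁ : IsBoundedUnder (· ≤ ·) atTop (fun s : ℝ => nMax Γ I₁ s / s ^ 2) :=
    isBoundedUnder_of_eventually_le hb₁
  have hcob₂ : IsCoboundedUnder (· ≤ ·) atTop (fun r : ℝ => nMax Γ I₂ r / r ^ 2) :=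
    isCoboundedUnder_le_of_le atTop (x := 0)
      fun r => div_nonneg (nMax_nonneg Γ I₂ r) (sq_nonneg r)
  have main : ∀ ε : ℝ, 0 < ε → upperDensity Γ I₂ ≤ (1 + ε) * (upperDensity Γ I₁ + ε) := by
    intro ε hε
    have h1 : ∀ᶠ s : ℝ in atTop, nMax Γ I₁ s / s ^ 2 < upperDensity Γ I₁ + ε := by
      apply eventually_lt_of_limsup_lt _ hbdd₁
      rw [← upperDensity_eq]
      linarith
    obtain ⟨s, hs1, hslt⟩ := ((eventually_ge_atTop 1).and h1).exists
    have hkey := key_upper hq hsep h1c h2c h1m h2m hs1 hε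
    rw [upperDensity_eq Γ I₂]
    refine limsup_le_of_le hcob₂ ?_
    filter_upwards [hkey] with r hkr
    calc nMax Γ I₂ r / r ^ 2 ≤ (1 + ε) * (nMax Γ I₁ s / s ^ 2) := hkr
      _ ≤ (1 + ε) * (upperDensity Γ I₁ + ε) :=
        mul_le_mul_of_nonneg_left hslt.le (by linarith)
  have hten : Tendsto (fun ε : ℝ => (1 + ε) * (upperDensity Γ I₁ + ε)) (𝓝[>] 0)
      (𝓝 (upperDensity Γ I₁)) := by
    have hc : Continuous fun ε : ℝ => (1 + ε) * (upperDensity Γ I₁ + ε) := by continuity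
    have h0 := hc.tendsto 0
    norm_num at h0
    exact h0.mono_left nhdsWithin_le_nhds
  refine ge_of_tendsto hten ?_
  filter_upwards [self_mem_nhdsWithin] with ε hε
  exact main ε hε

lemma lowerDensity_le {Γ : Set ℂ} (hΓ : UniformlyDiscrete Γ) {I₁ I₂ : Set ℂ}
    (h1c : IsCompact I₁) (h2c : IsCompact I₂)
    (h1m : volume I₁ = 1) (h2m : volume I₂ = 1) (h2b : volume (frontier I₂) = 0) :
    lowerDensity Γ I₁ ≤ lowerDensity Γ I₂ := by
  obtain ⟨q, hq, hsep⟩ := hΓ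
  obtain ⟨C₂, hC₂0, hC₂⟩ := eventually_card_le hq hsep h2c
  have hb₂ : ∀ᶠ r : ℝ in atTop, nMin Γ I₂ r / r ^ 2 ≤ C₂ := by
    filter_upwards [hC₂, eventually_ge_atTop 1] with r hr hr1
    rw [div_le_iff₀ (by positivity)]
    calc nMin Γ I₂ r ≤ ((Γ ∩ ((· + (0:ℂ)) '' (r • I₂))).ncard : ℝ) := by
          rw [nMin_eq]
          exact ciInf_le (bddBelow_card Γ (r • I₂)) 0
      _ ≤ C₂ * r ^ 2 := hr 0
  have hcob₂ : IsCoboundedUnder (· ≥ ·) atTop (fun r : ℝ => nMin Γ I₂ r / r ^ 2) :=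
    (isBoundedUnder_of_eventually_le hb₂).isCoboundedUnder_ge
  have hnn₂ : ∀ r : ℝ, 0 ≤ nMin Γ I₂ r / r ^ 2 :=
    fun r => div_nonneg (nMin_nonneg Γ I₂ r) (sq_nonneg r)
  have hbdd₁ : IsBoundedUnder (· ≥ ·) atTop (fun s : ℝ => nMin Γ I₁ s / s ^ 2) :=
    isBoundedUnder_of_eventually_ge (a := (0:ℝ))
      (Eventually.of_forall fun s => div_nonneg (nMin_nonneg Γ I₁ s) (sq_nonneg s))
  have hL2 : 0 ≤ lowerDensity Γ I₂ := by
    rw [lowerDensity_eq]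
    exact le_liminf_of_le hcob₂ (Eventually.of_forall hnn₂)
  have main : ∀ ε : ℝ, ε ∈ Set.Ioo (0:ℝ) 1 →
      (1 - ε) * (lowerDensity Γ I₁ - ε) ≤ lowerDensity Γ I₂ := by
    rintro ε ⟨hε, hε1⟩
    rcases le_or_gt (lowerDensity Γ I₁) ε with hle | hlt
    · nlinarith
    · have h1 : ∀ᶠ s : ℝ in atTop, lowerDensity Γ I₁ - ε < nMin Γ I₁ s / s ^ 2 := by
        apply eventually_lt_of_lt_liminf _ hbdd₁
        rw [← lowerDensity_eq]
        linarith
      obtain ⟨s, hs1, hslt⟩ := ((eventually_ge_atTop 1).and h1).exists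
      have hkey := key_lower hq hsep h1c h2c h1m h2m h2b hs1 hε hε1
      rw [lowerDensity_eq Γ I₂]
      refine le_liminf_of_le hcob₂ ?_
      filter_upwards [hkey] with r hkr
      calc (1 - ε) * (lowerDensity Γ I₁ - ε) ≤ (1 - ε) * (nMin Γ I₁ s / s ^ 2) :=
            mul_le_mul_of_nonneg_left hslt.le (by linarith)
        _ ≤ nMin Γ I₂ r / r ^ 2 := hkr
  have hten : Tendsto (fun ε : ℝ => (1 - ε) * (lowerDensity Γ I₁ - ε)) (𝓝[>] 0)
      (𝓝 (lowerDensity Γ I₁)) := by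
    have hc : Continuous fun ε : ℝ => (1 - ε) * (lowerDensity Γ I₁ - ε) := by continuity
    have h0 := hc.tendsto 0
    norm_num at h0
    exact h0.mono_left nhdsWithin_le_nhds
  refine le_of_tendsto hten ?_
  filter_upwards [Ioo_mem_nhdsGT_of_mem (Set.mem_Ico.2 ⟨le_refl (0:ℝ), one_pos⟩)] with ε hε
  exact main ε hε

end LandauAux

end LandauMain

/-- Landau's theorem — the uniform densities do not depend on the
choice of the compact set `I` of measure one with null boundary. -/
theorem density_independent_of_I (Γ : Set ℂ) (hΓ : UniformlyDiscrete Γ)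
    (I₁ I₂ : Set ℂ) (h1c : IsCompact I₁) (h2c : IsCompact I₂)
    (h1m : volume I₁ = 1) (h2m : volume I₂ = 1)
    (h1b : volume (frontier I₁) = 0) (h2b : volume (frontier I₂) = 0) :
    lowerDensity Γ I₁ = lowerDensity Γ I₂ ∧ upperDensity Γ I₁ = upperDensity Γ I₂ := by
  constructor
  · exact le_antisymm (LandauAux.lowerDensity_le hΓ h1c h2c h1m h2m h2b)
      (LandauAux.lowerDensity_le hΓ h2c h1c h2m h1m h1b)
  · exact le_antisymm (LandauAux.upperDensity_le hΓ h2c h1c h2m h1m)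
      (LandauAux.upperDensity_le hΓ h1c h2c h1m h2m)
end
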